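/- arXiv:1701.01338 — 3 statements merged into one kernel-verified Lean document; each statement's English description precedes it below -/
import Mathlib

section
/- Let $\mathcal{A}$ be a C*-algebra, $K \subseteq [-1,1]$ with $0$ a limit point, and let $[\mathcal{A}]_K$ be the completion of $(\mathcal{A}[Z], \|\cdot\|_K)$. Every element $F \in [\mathcal{A}]_K$ has a unique representation $F = a + G$ with $a \in \mathcal{A}$ (identified with constant power series) and $G \in \hat{\mathcal{A}}_1$, the closure of the set of power series with zero constant term. -/
open Filter Topology BoundedContinuousFunction

/-- The image of the pre-C*-algebra `𝒜[Z]` inside `C_b(K, 𝒜)` under evaluation: bounded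
continuous functions of the form `t ↦ ∑ aₙ tⁿ` with `∑ ‖aₙ‖ < ∞`.  Its closure is the
Cauchy extension `[𝒜]_K`. -/
def SAll (A : Type*) [NormedAddCommGroup A] [Module ℝ A] (K : Set ℝ) :
    Set (↥K →ᵇ A) :=
  {f | ∃ a : ℕ → A, Summable (fun n => ‖a n‖) ∧ ∀ t : K, f t = ∑' n, (t : ℝ) ^ n • a n}

/-- Power series with zero constant term; the closure of this set is `𝒜̂₁`. -/
def SOne (A : Type*) [NormedAddCommGroup A] [Module ℝ A] (K : Set ℝ) :
    Set (↥K →ᵇ A) :=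
  {f | ∃ a : ℕ → A, Summable (fun n => ‖a n‖) ∧ a 0 = 0 ∧
      ∀ t : K, f t = ∑' n, (t : ℝ) ^ n • a n}

/-!
Let `t → 0` in `K` be the filter `comap Subtype.val (𝓝 0)` on `K`, which is nontrivial because `0` is an
accumulation point of `K`. A power series converging absolutely on `[-1, 1]` tends along it to its
constant term, and limits along a nontrivial filter are `1`-Lipschitz in the sup norm. Hence the
bounded continuous functions having a limit form a closed set (completeness and Moore–Osgood), on
which `f ↦ f - lim f` is continuous; it maps `𝒜[Z]` into `𝒜₁`, hence `[𝒜]_K` into `𝒜̂₁`, which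
gives existence. Every element of `𝒜̂₁` tends to `0`, so `a` is forced to be the limit of `F`.
-/

namespace BoundedContinuousFunction

variable {X E : Type*} [TopologicalSpace X] [NormedAddCommGroup E] {L : Filter X}

theorem lipschitzWith_const : LipschitzWith 1 (const X : E → X →ᵇ E) :=
  LipschitzWith.of_dist_le_mul fun a b => by
    simpa using (dist_le dist_nonneg).2 fun _ => le_rfl

theorem norm_sub_le_dist_of_tendsto [L.NeBot] {f g : X →ᵇ E} {c d : E}
    (hf : Tendsto f L (𝓝 c)) (hg : Tendsto g L (𝓝 d)) : ‖c - d‖ ≤ dist f g :=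
  le_of_tendsto' (hf.sub hg).norm fun x => by
    simpa only [dist_eq_norm] using dist_coe_le_dist (f := f) (g := g) x

theorem isClosed_setOf_tendsto (c : E) : IsClosed {f : X →ᵇ E | Tendsto f L (𝓝 c)} := by
  refine isClosed_of_closure_subset fun F hF => ?_
  obtain ⟨u, hu, huF⟩ := mem_closure_iff_seq_limit.1 hF
  exact (tendsto_iff_tendstoUniformly.1 huF).tendsto_of_eventually_tendsto
    (Eventually.of_forall hu) tendsto_const_nhds

theorem lipschitzOnWith_limUnder [L.NeBot] :
    LipschitzOnWith 1 (fun f : X →ᵇ E => limUnder L f) {f | ∃ c, Tendsto f L (𝓝 c)} :=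
  LipschitzOnWith.of_dist_le_mul fun f hf g hg => by
    simpa [dist_eq_norm] using
      norm_sub_le_dist_of_tendsto (tendsto_nhds_limUnder hf) (tendsto_nhds_limUnder hg)

theorem isClosed_setOf_exists_tendsto [CompleteSpace E] [L.NeBot] :
    IsClosed {f : X →ᵇ E | ∃ c, Tendsto f L (𝓝 c)} := by
  refine isClosed_of_closure_subset fun F hF => ?_
  obtain ⟨u, hu, huF⟩ := mem_closure_iff_seq_limit.1 hF
  have hlim : CauchySeq fun n => limUnder L (u n) :=
    Metric.cauchySeq_iff.2 fun ε hε => (Metric.cauchySeq_iff.1 huF.cauchySeq ε hε).imp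
      fun N hN m hm n hn => (lipschitzOnWith_limUnder.dist_le_mul _ (hu m) _ (hu n)).trans_lt
        (by simpa using hN m hm n hn)
  obtain ⟨c, hc⟩ := cauchySeq_tendsto_of_complete hlim
  exact ⟨c, (tendsto_iff_tendstoUniformly.1 huF).tendsto_of_eventually_tendsto
    (Eventually.of_forall fun n => tendsto_nhds_limUnder (hu n)) hc⟩

theorem existsUnique_const_add_of_mem_closure [CompleteSpace E] [L.NeBot]
    {S₀ S₁ : Set (X →ᵇ E)} (h₀ : ∀ f ∈ S₀, ∃ c, Tendsto f L (𝓝 c) ∧ f - const X c ∈ S₁)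
    (h₁ : ∀ g ∈ S₁, Tendsto g L (𝓝 0)) {F : X →ᵇ E} (hF : F ∈ closure S₀) :
    ∃! p : E × (X →ᵇ E), p.2 ∈ closure S₁ ∧ F = const X p.1 + p.2 := by
  set S := {f : X →ᵇ E | ∃ c, Tendsto f L (𝓝 c)}
  have hS₀ : S₀ ⊆ S := fun f hf => (h₀ f hf).imp fun _ hc => hc.1
  have hFS : F ∈ S := closure_minimal hS₀ isClosed_setOf_exists_tendsto hF
  set P : (X →ᵇ E) → X →ᵇ E := fun f => f - const X (limUnder L f)
  have hP : ContinuousOn P S := continuousOn_id.sub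
    (lipschitzWith_const.continuous.comp_continuousOn lipschitzOnWith_limUnder.continuousOn)
  have hPS₀ : Set.MapsTo P S₀ S₁ := fun f hf => by
    obtain ⟨c, hc, hcS₁⟩ := h₀ f hf
    simpa only [P, hc.limUnder_eq] using hcS₁
  have hS₁ : ∀ G ∈ closure S₁, Tendsto G L (𝓝 0) := fun G hG =>
    closure_minimal h₁ (isClosed_setOf_tendsto 0) hG
  refine ⟨(limUnder L F, P F), ⟨((hP F hFS).mono hS₀).mem_closure hF hPS₀, ?_⟩, ?_⟩
  · exact (add_sub_cancel _ _).symm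
  rintro ⟨a, G⟩ ⟨hG, rfl⟩
  have hFa : Tendsto (const X a + G) L (𝓝 (a + 0)) := tendsto_const_nhds.add (hS₁ G hG)
  rw [add_zero] at hFa
  simp only [P, hFa.limUnder_eq, add_sub_cancel_left]

end BoundedContinuousFunction

section PowerSeries

open Set

variable {E : Type*} [NormedAddCommGroup E] [NormedSpace ℝ E] {a : ℕ → E} {K : Set ℝ}

theorem norm_pow_smul_le {t : ℝ} (ht : t ∈ Icc (-1) 1) (n : ℕ) : ‖t ^ n • a n‖ ≤ ‖a n‖ := by
  rw [norm_smul, norm_pow, Real.norm_eq_abs]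
  exact mul_le_of_le_one_left (norm_nonneg _) (pow_le_one₀ (abs_nonneg t) (abs_le.2 ht))

variable [CompleteSpace E]

theorem continuousOn_tsum_pow_smul (ha : Summable fun n => ‖a n‖) :
    ContinuousOn (fun t : ℝ => ∑' n, t ^ n • a n) (Icc (-1) 1) :=
  continuousOn_tsum (fun n => (continuousOn_pow n).smul continuousOn_const) ha
    fun n _ ht => norm_pow_smul_le ht n

theorem tendsto_comap_nhds_zero_of_eq_tsum (hK : K ⊆ Icc (-1) 1)
    (ha : Summable fun n => ‖a n‖) {f : K → E} (hf : ∀ t : K, f t = ∑' n, (t : ℝ) ^ n • a n) :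
    Tendsto f (comap Subtype.val (𝓝 0)) (𝓝 (a 0)) := by
  have hcont : Tendsto (fun t : ℝ => ∑' n, t ^ n • a n) (𝓝[Icc (-1) 1] 0) (𝓝 (a 0)) := by
    convert (continuousOn_tsum_pow_smul ha 0 ⟨by norm_num, by norm_num⟩).tendsto using 2
    rw [tsum_eq_single 0 fun n hn => by simp [zero_pow hn], pow_zero, one_smul]
  rw [funext hf]
  exact hcont.comp (tendsto_nhdsWithin_iff.2 ⟨tendsto_comap, Eventually.of_forall fun t => hK t.2⟩)

theorem tendsto_of_mem_SOne (hK : K ⊆ Icc (-1) 1) {g : K →ᵇ E} (hg : g ∈ SOne E K) :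
    Tendsto g (comap Subtype.val (𝓝 0)) (𝓝 0) := by
  obtain ⟨a, ha, ha0, hga⟩ := hg
  simpa only [ha0] using tendsto_comap_nhds_zero_of_eq_tsum hK ha hga

theorem exists_tendsto_and_sub_const_mem_SOne (hK : K ⊆ Icc (-1) 1) {f : K →ᵇ E}
    (hf : f ∈ SAll E K) :
    ∃ c, Tendsto f (comap Subtype.val (𝓝 0)) (𝓝 c) ∧ f - const K c ∈ SOne E K := by
  obtain ⟨a, ha, hfa⟩ := hf
  have hupdate : ∀ t : ℝ, (fun n => t ^ n • Function.update a 0 0 n) =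
      Function.update (fun n => t ^ n • a n) 0 0 := fun t => by
    funext n; rcases n with _ | n <;> simp
  refine ⟨a 0, tendsto_comap_nhds_zero_of_eq_tsum hK ha hfa, Function.update a 0 0,
    (summable_nat_add_iff 1).1 (by simpa using (summable_nat_add_iff 1).2 ha),
    Function.update_self .., fun t => ?_⟩
  have hs : HasSum (fun n => (t : ℝ) ^ n • a n) (f t) := by
    rw [hfa t]
    exact (Summable.of_norm_bounded ha (norm_pow_smul_le (hK t.2))).hasSum
  rw [hupdate, (hs.update 0 0).tsum_eq]
  simp [sub_eq_neg_add]

end PowerSeries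

theorem unique_decomposition_general {A : Type*} [NonUnitalNormedRing A]
    [CompleteSpace A] [NormedSpace ℝ A]
    (K : Set ℝ) (hK : K ⊆ Set.Icc (-1) 1)
    (h0 : AccPt (0 : ℝ) (Filter.principal K)) :
    ∀ F ∈ closure (SAll A K), ∃! p : A × (↥K →ᵇ A),
      p.2 ∈ closure (SOne A K) ∧
      F = BoundedContinuousFunction.const (↥K) p.1 + p.2 := by
  have : (comap (Subtype.val : K → ℝ) (𝓝 0)).NeBot :=
    mem_closure_iff_comap_neBot.1 (mem_closure_iff_clusterPt.2 h0.clusterPt)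
  exact fun F => existsUnique_const_add_of_mem_closure
    (fun _ => exists_tendsto_and_sub_const_mem_SOne hK) (fun _ => tendsto_of_mem_SOne hK)

/-- Every element `F` of the Cauchy extension `[𝒜]_K` (the completion of `𝒜[Z]` with the
norm `‖·‖_K`, realized as the closure of the evaluation functions in `C_b(K,𝒜)`) has a
unique representation `F = a + G` with `a ∈ 𝒜` (a constant power series) and
`G ∈ 𝒜̂₁` (the closure of the series with zero constant term). -/
theorem unique_decomposition {A : Type*} [NonUnitalNormedRing A]
    [StarRing A] [CStarRing A] [CompleteSpace A] [NormedSpace ℝ A]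
    [IsScalarTower ℝ A A] [SMulCommClass ℝ A A]
    (K : Set ℝ) (hK : K ⊆ Set.Icc (-1) 1)
    (h0 : AccPt (0 : ℝ) (Filter.principal K)) :
    ∀ F ∈ closure (SAll A K), ∃! p : A × (↥K →ᵇ A),
      p.2 ∈ closure (SOne A K) ∧
      F = BoundedContinuousFunction.const (↥K) p.1 + p.2 :=
  unique_decomposition_general K hK h0
end

section
/- With notation as above, for all $a \in \mathcal{A}$ and $G \in \hat{\mathcal{A}}_1$ one has $\|a\|_K = \|a\|$ and $\|a\| \le \|a + G\|_K$. Consequently the map $p_{\mathcal{A}} : [\mathcal{A}]_K \to \mathcal{A}$, $a + G \mapsto a$, is a well-defined surjective *-homomorphism with kernel $\hat{\mathcal{A}}_1$, giving a short exact sequence $0 \to \hat{\mathcal{A}}_1 \to [\mathcal{A}]_K \to \mathcal{A} \to 0$. -/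
open Filter Topology BoundedContinuousFunction

private lemma summable_pow_smul' {A : Type*} [NormedAddCommGroup A] [Module ℝ A]
    [IsBoundedSMul ℝ A] [CompleteSpace A] {t : ℝ} (ht : |t| ≤ 1) (a : ℕ → A)
    (ha : Summable fun n => ‖a n‖) : Summable fun n => t ^ n • a n := by
  refine Summable.of_norm_bounded ha fun n => ?_
  calc ‖t ^ n • a n‖ ≤ ‖t ^ n‖ * ‖a n‖ := norm_smul_le _ _
    _ ≤ 1 * ‖a n‖ := by
        refine mul_le_mul_of_nonneg_right ?_ (norm_nonneg _)
        rw [norm_pow, Real.norm_eq_abs]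
        exact pow_le_one₀ (abs_nonneg t) ht
    _ = ‖a n‖ := one_mul _

private lemma norm_tsum_sub_le' {A : Type*} [NormedAddCommGroup A] [NormedSpace ℝ A] [CompleteSpace A]
    {t : ℝ} (ht : |t| ≤ 1) (a : ℕ → A) (ha : Summable fun n => ‖a n‖) :
    ‖(∑' n, t ^ n • a n) - a 0‖ ≤ |t| * ∑' n, ‖a n‖ := by
  have hs := summable_pow_smul' ht a ha
  rw [Summable.tsum_eq_zero_add hs]
  simp only [pow_zero, one_smul, add_sub_cancel_left]
  have h1 : Summable fun n => ‖a (n + 1)‖ :=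
    ha.comp_injective (add_left_injective 1)
  have hbd : ∀ n : ℕ, ‖t ^ (n + 1) • a (n + 1)‖ ≤ |t| * ‖a (n + 1)‖ := by
    intro n
    calc ‖t ^ (n + 1) • a (n + 1)‖ ≤ ‖t ^ (n+1)‖ * ‖a (n + 1)‖ := norm_smul_le _ _
      _ ≤ |t| * ‖a (n + 1)‖ := by
          refine mul_le_mul_of_nonneg_right ?_ (norm_nonneg _)
          rw [norm_pow, Real.norm_eq_abs]
          calc |t| ^ (n + 1) ≤ |t| ^ 1 :=
                pow_le_pow_of_le_one (abs_nonneg t) ht (by omega)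
            _ = |t| := pow_one _
  have h2 : Summable fun n : ℕ => ‖t ^ (n + 1) • a (n + 1)‖ :=
    Summable.of_nonneg_of_le (fun n => norm_nonneg _) hbd (h1.mul_left |t|)
  calc ‖∑' n, t ^ (n + 1) • a (n + 1)‖ ≤ ∑' n, ‖t ^ (n + 1) • a (n + 1)‖ :=
        norm_tsum_le_tsum_norm h2
    _ ≤ ∑' n, |t| * ‖a (n + 1)‖ := Summable.tsum_le_tsum hbd h2 (h1.mul_left |t|)
    _ = |t| * ∑' n, ‖a (n + 1)‖ := tsum_mul_left
    _ ≤ |t| * ∑' n, ‖a n‖ := by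
        refine mul_le_mul_of_nonneg_left ?_ (abs_nonneg t)
        exact tsum_comp_le_tsum_of_inj ha (fun n => norm_nonneg _)
          (add_left_injective 1)

/-- For `a ∈ 𝒜` and `G ∈ 𝒜̂₁` one has `‖a‖_K = ‖a‖` and `‖a‖ ≤ ‖a + G‖_K`.
Consequently the projection `p_𝒜 : [𝒜]_K → 𝒜`, `a + G ↦ a`, is a well-defined surjective
*-homomorphism with kernel `𝒜̂₁`, giving the short exact sequence
`0 → 𝒜̂₁ → [𝒜]_K → 𝒜 → 0`.  Here `[𝒜]_K` is realized as the closure of the evaluation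
functions in `C_b(K, 𝒜)` and `𝒜` is embedded as constant functions. -/
theorem projection_short_exact {A : Type*} [NonUnitalNormedRing A]
    [StarRing A] [CStarRing A] [NormedStarGroup A] [CompleteSpace A] [NormedSpace ℝ A]
    [IsScalarTower ℝ A A] [SMulCommClass ℝ A A]
    (K : Set ℝ) (hK : K ⊆ Set.Icc (-1) 1)
    (h0 : AccPt (0 : ℝ) (Filter.principal K)) :
    (∀ a : A, ‖BoundedContinuousFunction.const (↥K) a‖ = ‖a‖) ∧
    (∀ a : A, ∀ G ∈ closure (SOne A K),
      ‖a‖ ≤ ‖BoundedContinuousFunction.const (↥K) a + G‖) ∧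
    ∃ p : (↥K →ᵇ A) → A,
      (∀ a : A, ∀ G ∈ closure (SOne A K),
        p (BoundedContinuousFunction.const (↥K) a + G) = a) ∧
      (∀ F ∈ closure (SAll A K), ∀ F' ∈ closure (SAll A K),
        p (F + F') = p F + p F' ∧ p (F * F') = p F * p F') ∧
      (∀ F ∈ closure (SAll A K), p (star F) = star (p F)) ∧
      (∀ b : A, ∃ F ∈ closure (SAll A K), p F = b) ∧
      (∀ F ∈ closure (SAll A K), (p F = 0 ↔ F ∈ closure (SOne A K))) := by
  classical
  have hKab : ∀ t : ↥K, |(t : ℝ)| ≤ 1 := fun t => abs_le.2 ⟨(hK t.2).1, (hK t.2).2⟩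
  set φ : Filter ↥K := Filter.comap Subtype.val (𝓝[≠] (0:ℝ) ⊓ 𝓟 K) with hφdef
  have hbot : (𝓝[≠] (0:ℝ) ⊓ 𝓟 K).NeBot := h0
  have hφ : φ.NeBot := by
    refine Filter.comap_neBot fun t ht => ?_
    have h1 : t ∩ K ∈ 𝓝[≠] (0:ℝ) ⊓ 𝓟 K :=
      Filter.inter_mem ht (Filter.mem_inf_of_right (Filter.mem_principal_self K))
    obtain ⟨x, hx1, hx2⟩ := Filter.nonempty_of_mem h1
    exact ⟨⟨x, hx2⟩, hx1⟩
  haveI := hφ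
  haveI : Nonempty ↥K := Filter.nonempty_of_neBot φ
  have hval : Filter.Tendsto (Subtype.val : ↥K → ℝ) φ (𝓝 0) :=
    Filter.tendsto_comap.mono_right (inf_le_left.trans nhdsWithin_le_nhds)
  have habs : Filter.Tendsto (fun t : ↥K => |(t : ℝ)|) φ (𝓝 0) := by
    simpa using hval.abs
  -- key convergence for explicit power series
  have key : ∀ (f : ↥K →ᵇ A) (a : ℕ → A), Summable (fun n => ‖a n‖) →
      (∀ t : K, f t = ∑' n, (t : ℝ) ^ n • a n) →
      Filter.Tendsto (fun t : ↥K => f t) φ (𝓝 (a 0)) := by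
    intro f a ha hrep
    rw [tendsto_iff_norm_sub_tendsto_zero]
    have hC : Filter.Tendsto (fun t : ↥K => |(t : ℝ)| * ∑' n, ‖a n‖) φ (𝓝 0) := by
      simpa using habs.mul_const (∑' n, ‖a n‖)
    refine squeeze_zero (fun t => norm_nonneg _) (fun t => ?_) hC
    rw [hrep t]
    exact norm_tsum_sub_le' (hKab t) a ha
  -- distance between limits is bounded by the sup distance
  have hdist : ∀ (g h : ↥K →ᵇ A) (bg bh : A),
      Filter.Tendsto (fun t : ↥K => g t) φ (𝓝 bg) →
      Filter.Tendsto (fun t : ↥K => h t) φ (𝓝 bh) → ‖bg - bh‖ ≤ ‖g - h‖ := by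
    intro g h bg bh hg hh
    have hlim : Filter.Tendsto (fun t : ↥K => ‖g t - h t‖) φ (𝓝 ‖bg - bh‖) :=
      (hg.sub hh).norm
    refine le_of_tendsto hlim (Filter.Eventually.of_forall fun t => ?_)
    calc ‖g t - h t‖ = ‖(g - h) t‖ := by simp
      _ ≤ ‖g - h‖ := norm_coe_le_norm _ t
  -- every element of the closure of SAll has a limit along φ
  have keyc : ∀ F ∈ closure (SAll A K), ∃ b : A,
      Filter.Tendsto (fun t : ↥K => F t) φ (𝓝 b) := by
    intro F hF
    obtain ⟨u, hu, hulim⟩ := mem_closure_iff_seq_limit.1 hF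
    choose a ha hrep using hu
    have hconv : ∀ k, Filter.Tendsto (fun t : ↥K => u k t) φ (𝓝 (a k 0)) :=
      fun k => key (u k) (a k) (ha k) (hrep k)
    have hcauchy : CauchySeq fun k => a k 0 := by
      have hcu : CauchySeq u := hulim.cauchySeq
      rw [Metric.cauchySeq_iff] at hcu ⊢
      intro ε hε
      obtain ⟨N, hN⟩ := hcu ε hε
      refine ⟨N, fun m hm n hn => ?_⟩
      have := hdist (u m) (u n) (a m 0) (a n 0) (hconv m) (hconv n)
      rw [dist_eq_norm]
      refine lt_of_le_of_lt this ?_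
      rw [← dist_eq_norm]
      exact hN m hm n hn
    obtain ⟨b, hb⟩ := cauchySeq_tendsto_of_complete hcauchy
    refine ⟨b, Metric.tendsto_nhds.2 fun ε hε => ?_⟩
    obtain ⟨k, hk1, hk2⟩ : ∃ k, dist (u k) F < ε / 3 ∧ dist (a k 0) b < ε / 3 := by
      have h1 := Metric.tendsto_nhds.1 hulim (ε / 3) (by linarith)
      have h2 := Metric.tendsto_nhds.1 hb (ε / 3) (by linarith)
      exact (h1.and h2).exists
    have hev := Metric.tendsto_nhds.1 (hconv k) (ε / 3) (by linarith)
    filter_upwards [hev] with t ht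
    calc dist (F t) b ≤ dist (F t) (u k t) + dist (u k t) (a k 0) + dist (a k 0) b :=
          dist_triangle4 _ _ _ _
      _ < ε / 3 + ε / 3 + ε / 3 := by
          refine add_lt_add (add_lt_add_of_le_of_lt ?_ ht) hk2
          calc dist (F t) (u k t) = dist (u k t) (F t) := dist_comm _ _
            _ ≤ dist (u k) F := dist_coe_le_dist t
            _ ≤ ε / 3 := le_of_lt hk1
      _ = ε := by ring
  -- every element of the closure of SOne tends to 0 along φ
  have hSsub : SOne A K ⊆ SAll A K := fun f ⟨a, ha, _, hrep⟩ => ⟨a, ha, hrep⟩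
  have keyz : ∀ G ∈ closure (SOne A K), Filter.Tendsto (fun t : ↥K => G t) φ (𝓝 0) := by
    intro G hG
    obtain ⟨b, hb⟩ := keyc G (closure_mono hSsub hG)
    obtain ⟨u, hu, hulim⟩ := mem_closure_iff_seq_limit.1 hG
    have hzero : ∀ k, Filter.Tendsto (fun t : ↥K => u k t) φ (𝓝 0) := by
      intro k
      obtain ⟨a, ha, ha0, hrep⟩ := hu k
      have := key (u k) a ha hrep
      rwa [ha0] at this
    have hbnorm : ∀ k, ‖b - 0‖ ≤ ‖G - u k‖ := fun k => hdist G (u k) b 0 hb (hzero k)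
    have h2 : Filter.Tendsto (fun k => ‖G - u k‖) atTop (𝓝 0) := by
      have := (tendsto_iff_dist_tendsto_zero).1 hulim
      simpa [dist_eq_norm, norm_sub_rev] using this
    have hb0 : b = 0 := by
      have hle : ‖b - 0‖ ≤ 0 := ge_of_tendsto h2 (Filter.Eventually.of_forall hbnorm)
      simpa using norm_le_zero_iff.1 (by simpa using hle)
    rwa [hb0] at hb
  -- the projection
  set p : (↥K →ᵇ A) → A := fun F => limUnder φ (fun t : ↥K => F t) with hpdef
  have hplim : ∀ (F : ↥K →ᵇ A) (c : A),
      Filter.Tendsto (fun t : ↥K => F t) φ (𝓝 c) → p F = c :=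
    fun F c h => h.limUnder_eq
  refine ⟨fun a => norm_const_eq a, ?_, p, ?_, ?_, ?_, ?_, ?_⟩
  · -- ‖a‖ ≤ ‖const a + G‖
    intro a G hG
    have h1 : Filter.Tendsto (fun t : ↥K => ‖(BoundedContinuousFunction.const (↥K) a + G) t‖)
        φ (𝓝 ‖a‖) := by
      have := ((tendsto_const_nhds : Filter.Tendsto (fun _ : ↥K => a) φ (𝓝 a)).add
        (keyz G hG)).norm
      simp only [add_zero] at this
      exact this.congr fun t => by simp
    exact le_of_tendsto h1 (Filter.Eventually.of_forall fun t => norm_coe_le_norm _ t)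
  · -- p (const a + G) = a
    intro a G hG
    refine hplim _ a ?_
    have := (tendsto_const_nhds : Filter.Tendsto (fun _ : ↥K => a) φ (𝓝 a)).add (keyz G hG)
    simp only [add_zero] at this
    exact this.congr fun t => by simp
  · -- additive and multiplicative
    intro F hF F' hF'
    obtain ⟨b, hb⟩ := keyc F hF
    obtain ⟨b', hb'⟩ := keyc F' hF'
    constructor
    · rw [hplim F b hb, hplim F' b' hb',
        hplim (F + F') (b + b') ((hb.add hb').congr fun t => by simp)]
    · rw [hplim F b hb, hplim F' b' hb',
        hplim (F * F') (b * b') ((hb.mul hb').congr fun t => by simp)]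
  · -- star
    intro F hF
    obtain ⟨b, hb⟩ := keyc F hF
    rw [hplim F b hb, hplim (star F) (star b) (hb.star.congr fun t => by simp)]
  · -- surjectivity
    intro b
    refine ⟨BoundedContinuousFunction.const (↥K) b, subset_closure ?_, ?_⟩
    · refine ⟨fun n => if n = 0 then b else 0, ?_, ?_⟩
      · refine summable_of_ne_finset_zero (s := {0}) fun n hn => ?_
        simp only [Finset.mem_singleton] at hn
        simp [hn]
      · intro t
        rw [tsum_eq_single 0 (fun n hn => by simp [hn])]
        simp
    · exact hplim _ b (tendsto_const_nhds.congr fun t => by simp)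
  · -- kernel
    intro F hF
    constructor
    · intro hp0
      obtain ⟨u, hu, hulim⟩ := mem_closure_iff_seq_limit.1 hF
      choose a ha hrep using hu
      have hconv : ∀ k, Filter.Tendsto (fun t : ↥K => u k t) φ (𝓝 (a k 0)) :=
        fun k => key (u k) (a k) (ha k) (hrep k)
      obtain ⟨b, hb⟩ := keyc F hF
      have hb0 : b = 0 := by rw [← hplim F b hb]; exact hp0
      rw [hb0] at hb
      have hcoef : Filter.Tendsto (fun k => a k 0) atTop (𝓝 0) := by
        rw [tendsto_iff_norm_sub_tendsto_zero]
        have hle : ∀ k, ‖a k 0 - 0‖ ≤ ‖u k - F‖ := fun k => hdist _ _ _ _ (hconv k) hb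
        have h2 : Filter.Tendsto (fun k => ‖u k - F‖) atTop (𝓝 0) := by
          have := (tendsto_iff_dist_tendsto_zero).1 hulim
          simpa [dist_eq_norm] using this
        exact squeeze_zero (fun k => norm_nonneg _) hle h2
      refine mem_closure_iff_seq_limit.2
        ⟨fun k => u k - BoundedContinuousFunction.const (↥K) (a k 0), fun k => ?_, ?_⟩
      · -- u k - const (a k 0) ∈ SOne
        refine ⟨fun n => if n = 0 then 0 else a k n, ?_, by simp, fun t => ?_⟩
        · refine Summable.of_nonneg_of_le (fun n => norm_nonneg _) (fun n => ?_) (ha k)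
          by_cases hn : n = 0 <;> simp [hn]
        · have hsum' : Summable fun n => ‖(if n = 0 then 0 else a k n : A)‖ := by
            refine Summable.of_nonneg_of_le (fun n => norm_nonneg _) (fun n => ?_) (ha k)
            by_cases hn : n = 0 <;> simp [hn]
          have hs1 : Summable fun n => (t : ℝ) ^ n • (if n = 0 then 0 else a k n) :=
            summable_pow_smul' (hKab t) _ hsum'
          have hs2 : Summable fun n : ℕ => (t : ℝ) ^ n • (if n = 0 then a k 0 else 0) :=
            summable_of_ne_finset_zero (s := {0}) fun n hn => by
              simp only [Finset.mem_singleton] at hn; simp [hn]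
          calc (u k - BoundedContinuousFunction.const (↥K) (a k 0)) t
              = u k t - a k 0 := by simp
            _ = (∑' n, (t : ℝ) ^ n • a k n) - a k 0 := by rw [hrep k t]
            _ = ∑' n, (t : ℝ) ^ n • (if n = 0 then 0 else a k n) := by
                have hcongr : ∀ n : ℕ, (t : ℝ) ^ n • a k n =
                    (t : ℝ) ^ n • (if n = 0 then 0 else a k n)
                    + (t : ℝ) ^ n • (if n = 0 then a k 0 else 0) := by
                  intro n
                  by_cases hn : n = 0 <;> simp [hn]
                have h20 : (∑' n : ℕ, (t : ℝ) ^ n • (if n = 0 then a k 0 else 0)) = a k 0 := by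
                  rw [tsum_eq_single 0 (fun n hn => by simp [hn])]
                  simp
                rw [tsum_congr hcongr, Summable.tsum_add hs1 hs2, h20, add_sub_cancel_right]
      · -- tendsto F
        have hconst : Filter.Tendsto
            (fun k => BoundedContinuousFunction.const (↥K) (a k 0)) atTop (𝓝 0) := by
          rw [tendsto_iff_norm_sub_tendsto_zero]
          refine squeeze_zero (g := fun k => ‖a k 0‖) (fun k => norm_nonneg _)
            (fun k => ?_) ?_
          · simp only [sub_zero]
            exact norm_const_le _
          · simpa [tendsto_iff_norm_sub_tendsto_zero] using hcoef
        have := hulim.sub hconst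
        simpa using this
    · intro hG
      exact hplim F 0 (keyz F hG)
end

section
/- Let $\mathcal{A}$ be a nonzero C*-algebra and $K \subseteq [-1,1]$ with $0$ a limit point. Then the C*-algebra $\hat{\mathcal{A}}_1$ (the closure in $[\mathcal{A}]_K$ of the power series with zero constant term) has no multiplicative identity. -/
open Filter Topology BoundedContinuousFunction

/-- For a nonzero C*-algebra `𝒜` and `K ⊆ [-1,1]` with `0` a limit point, the
C*-algebra `𝒜̂₁` (the closure in `[𝒜]_K` of the power series with zero constant term)
has no multiplicative identity. -/
theorem A1_not_unital {A : Type*} [NonUnitalNormedRing A]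
    [StarRing A] [CStarRing A] [CompleteSpace A] [NormedSpace ℝ A]
    [IsScalarTower ℝ A A] [SMulCommClass ℝ A A]
    (hA : ∃ x : A, x ≠ 0)
    (K : Set ℝ) (hK : K ⊆ Set.Icc (-1) 1)
    (h0 : AccPt (0 : ℝ) (Filter.principal K)) :
    ¬ ∃ U ∈ closure (SOne A K), ∀ F ∈ closure (SOne A K), U * F = F ∧ F * U = F := by
  rintro ⟨U, hU, hunit⟩
  obtain ⟨x, hx⟩ := hA
  -- a sequence in K \ {0} tending to 0
  have h0' : (0 : ℝ) ∈ closure ({(0:ℝ)}ᶜ ∩ K) := by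
    rw [mem_closure_iff_clusterPt]
    rw [accPt_iff_clusterPt] at h0
    rwa [inf_principal] at h0
  obtain ⟨u, hu, hulim⟩ := mem_closure_iff_seq_limit.mp h0'
  have huK : ∀ n, u n ∈ K := fun n => (hu n).2
  have hune : ∀ n, u n ≠ 0 := fun n => (hu n).1
  set v : ℕ → ↥K := fun n => ⟨u n, huK n⟩ with hv
  -- norm bound on elements of SOne
  have key : ∀ f ∈ SOne A K, ∃ C : ℝ, ∀ t : ↥K, ‖f t‖ ≤ |(t : ℝ)| * C := by
    rintro f ⟨a, ha, ha0, hf⟩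
    refine ⟨∑' n, ‖a n‖, fun t => ?_⟩
    have ht : |(t : ℝ)| ≤ 1 := abs_le.mpr ⟨(hK t.2).1, (hK t.2).2⟩
    rw [hf t]
    have hnorm : Summable (fun n => ‖(t : ℝ) ^ n • a n‖) := by
      apply ha.of_nonneg_of_le (fun n => norm_nonneg _)
      intro n
      rw [norm_smul, norm_pow, Real.norm_eq_abs]
      exact mul_le_of_le_one_left (norm_nonneg _) (pow_le_one₀ (abs_nonneg _) ht)
    calc ‖∑' n, (t : ℝ) ^ n • a n‖ ≤ ∑' n, ‖(t : ℝ) ^ n • a n‖ :=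
          norm_tsum_le_tsum_norm hnorm
      _ ≤ ∑' n, |(t:ℝ)| * ‖a n‖ := by
          refine Summable.tsum_le_tsum (fun n => ?_) hnorm (ha.mul_left _)
          rw [norm_smul, norm_pow, Real.norm_eq_abs]
          cases n with
          | zero => simp [ha0]
          | succ m =>
              calc |(t:ℝ)| ^ (m+1) * ‖a (m+1)‖ ≤ |(t:ℝ)| ^ 1 * ‖a (m+1)‖ :=
                    mul_le_mul_of_nonneg_right
                      (pow_le_pow_of_le_one (abs_nonneg _) ht (by omega)) (norm_nonneg _)
                _ = |(t:ℝ)| * ‖a (m+1)‖ := by ring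
      _ = |(t:ℝ)| * ∑' n, ‖a n‖ := tsum_mul_left
  -- elements of the closure vanish at 0 along v
  have vanish : ∀ f ∈ closure (SOne A K),
      Filter.Tendsto (fun n => ‖f (v n)‖) atTop (𝓝 0) := by
    intro f hf
    rw [Metric.tendsto_atTop]
    intro ε hε
    obtain ⟨g, hgS, hfg⟩ := Metric.mem_closure_iff.mp hf (ε / 2) (by positivity)
    obtain ⟨C, hC⟩ := key g hgS
    have : Filter.Tendsto (fun n => |u n| * C) atTop (𝓝 0) := by
      have := (hulim.abs).mul_const C
      simpa using this
    rw [Metric.tendsto_atTop] at this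
    obtain ⟨N, hN⟩ := this (ε / 2) (by positivity)
    refine ⟨N, fun n hn => ?_⟩
    have h1 : ‖f (v n)‖ ≤ ‖f (v n) - g (v n)‖ + ‖g (v n)‖ := by
      simpa using norm_add_le (f (v n) - g (v n)) (g (v n))
    have h2 : ‖f (v n) - g (v n)‖ ≤ dist f g := by
      rw [← dist_eq_norm]
      exact BoundedContinuousFunction.dist_coe_le_dist _
    have h3 : ‖g (v n)‖ ≤ |u n| * C := hC (v n)
    have h4 : |u n| * C < ε / 2 := by
      have := hN n hn
      rw [Real.dist_eq, sub_zero] at this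
      calc |u n| * C ≤ |(|u n| * C)| := le_abs_self _
        _ < ε / 2 := this
    rw [Real.dist_eq, sub_zero, abs_of_nonneg (norm_nonneg _)]
    linarith
  -- the test function F t = t • x
  set F : ↥K →ᵇ A := BoundedContinuousFunction.ofNormedAddCommGroup
    (fun t : ↥K => (t : ℝ) • x)
    (by continuity)
    ‖x‖
    (by
      intro t
      rw [norm_smul, Real.norm_eq_abs]
      have ht : |(t : ℝ)| ≤ 1 := abs_le.mpr ⟨(hK t.2).1, (hK t.2).2⟩
      calc |(t:ℝ)| * ‖x‖ ≤ 1 * ‖x‖ := by gcongr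
        _ = ‖x‖ := one_mul _) with hF
  have hFS : F ∈ SOne A K := by
    refine ⟨fun n => if n = 1 then x else 0, ?_, by simp, fun t => ?_⟩
    · apply summable_of_finite_support
      apply Set.Finite.subset (Set.finite_singleton 1)
      intro n hn
      simp only [Function.mem_support] at hn
      by_contra h
      simp only [Set.mem_singleton_iff] at h
      simp [h] at hn
    · have : ∑' n, (t : ℝ) ^ n • (if n = 1 then x else (0:A)) = (t:ℝ) ^ 1 • x := by
        rw [tsum_eq_single 1]
        · simp
        · intro n hn; simp [hn]
      simp only [this, pow_one]
      rfl
  obtain ⟨hUF, -⟩ := hunit F (subset_closure hFS)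
  have hpt : ∀ n, U (v n) * x = x := by
    intro n
    have := congrArg (fun G : ↥K →ᵇ A => G (v n)) hUF
    simp only [BoundedContinuousFunction.coe_mul, Pi.mul_apply] at this
    have hFv : F (v n) = (u n) • x := rfl
    rw [hFv, mul_smul_comm] at this
    exact smul_right_injective A (hune n) this
  have hxle : ∀ n, ‖x‖ ≤ ‖U (v n)‖ * ‖x‖ := by
    intro n
    calc ‖x‖ = ‖U (v n) * x‖ := by rw [hpt n]
      _ ≤ ‖U (v n)‖ * ‖x‖ := norm_mul_le _ _
  have hlim : Filter.Tendsto (fun n => ‖U (v n)‖ * ‖x‖) atTop (𝓝 0) := by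
    simpa using (vanish U hU).mul_const ‖x‖
  have : ‖x‖ ≤ 0 := le_of_tendsto_of_tendsto tendsto_const_nhds hlim
    (Filter.Eventually.of_forall hxle)
  exact hx (norm_le_zero_iff.mp this)
end
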